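/- Let G = (ℤ/2ℤ)³ and let {L_χ}_{χ∈Ĝ, χ≠1} and {D_σ}_{σ∈G, σ≠0} be elements of an abelian group A satisfying L_χ + L_{χ'} = L_{χχ'} + Σ_{σ : χ(σ)=χ'(σ)=-1} D_σ for all nontrivial χ ≠ χ' (with the convention L_{1} = 0 when χχ' = 1). Then for every nontrivial character χ: 2L_χ = Σ_{σ : χ(σ) = -1} D_σ. -/
import Mathlib


open scoped Classical

private lemma pardini_add_self (σ : ZMod 2 × ZMod 2 × ZMod 2) : σ + σ = 0 := by
  have h : ∀ x : ZMod 2, x + x = 0 := by decide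
  obtain ⟨a, b, c⟩ := σ
  simp [Prod.ext_iff, h]

private lemma pardini_neg_one_ne_one : (-1 : ℂˣ) ≠ 1 := by
  intro h
  have : (-1 : ℂ) = 1 := congrArg Units.val h
  norm_num at this

private lemma pardini_sq (ψ : AddChar (ZMod 2 × ZMod 2 × ZMod 2) ℂˣ)
    (σ : ZMod 2 × ZMod 2 × ZMod 2) : ψ σ * ψ σ = 1 := by
  rw [← AddChar.map_add_eq_mul, pardini_add_self, AddChar.map_zero_eq_one]

private lemma pardini_vals (ψ : AddChar (ZMod 2 × ZMod 2 × ZMod 2) ℂˣ)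
    (σ : ZMod 2 × ZMod 2 × ZMod 2) : ψ σ = 1 ∨ ψ σ = -1 := by
  have h : ((ψ σ : ℂˣ) : ℂ) ^ 2 = 1 := by
    rw [sq, ← Units.val_mul, pardini_sq ψ σ, Units.val_one]
  rcases sq_eq_one_iff.mp h with h1 | h1
  · exact Or.inl (Units.ext (by simpa using h1))
  · exact Or.inr (Units.ext (by simpa using h1))

private lemma pardini_self_mul (ψ : AddChar (ZMod 2 × ZMod 2 × ZMod 2) ℂˣ) :
    ψ * ψ = 1 := by
  ext σ
  rw [AddChar.mul_apply, pardini_sq ψ σ, AddChar.one_apply]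

/-- Let `G = (ℤ/2ℤ)³`, and let `L_χ` (for nontrivial characters `χ` of `G`
with values in `{±1} ⊂ ℂ*`) and `D_σ` (for nontrivial `σ ∈ G`) be elements of an abelian
group `A` satisfying Pardini's building-data relations
`L_χ + L_χ' = L_{χχ'} + Σ_{σ : χ(σ)=χ'(σ)=-1} D_σ` for all nontrivial `χ ≠ χ'` (with the
convention `L_1 = 0`).  Then for every nontrivial character `χ`,
`2L_χ = Σ_{σ : χ(σ) = -1} D_σ`. -/
theorem pardini_double_relations (A : Type*) [AddCommGroup A]
    (L : AddChar (ZMod 2 × ZMod 2 × ZMod 2) ℂˣ → A)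
    (D : ZMod 2 × ZMod 2 × ZMod 2 → A)
    (hL1 : L 1 = 0)
    (hrel : ∀ χ χ' : AddChar (ZMod 2 × ZMod 2 × ZMod 2) ℂˣ, χ ≠ 1 → χ' ≠ 1 → χ ≠ χ' →
      L χ + L χ' = L (χ * χ') +
        ∑ σ ∈ Finset.univ.filter (fun σ => χ σ = -1 ∧ χ' σ = -1), D σ) :
    ∀ χ : AddChar (ZMod 2 × ZMod 2 × ZMod 2) ℂˣ, χ ≠ 1 →
      2 • L χ = ∑ σ ∈ Finset.univ.filter (fun σ => χ σ = -1), D σ := by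
  intro χ hχ
  -- the basic quadratic character on `ZMod 2`
  have hζ : (-1 : ℂˣ) ^ 2 = 1 := by rw [neg_one_sq]
  set e : AddChar (ZMod 2) ℂˣ := AddChar.zmodChar 2 hζ with he
  have he1 : e 1 = -1 := by
    rw [he, AddChar.zmodChar_apply, ZMod.val_one, pow_one]
  have he0 : e 0 = 1 := by
    rw [he, AddChar.zmodChar_apply, ZMod.val_zero, pow_zero]
  -- two coordinate characters
  set E1 : AddChar (ZMod 2 × ZMod 2 × ZMod 2) ℂˣ :=
    e.compAddMonoidHom (AddMonoidHom.fst _ _) with hE1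
  set E2 : AddChar (ZMod 2 × ZMod 2 × ZMod 2) ℂˣ :=
    e.compAddMonoidHom ((AddMonoidHom.fst _ _).comp (AddMonoidHom.snd _ _)) with hE2
  have hE1v : E1 (1, 0, 0) = -1 := by simpa [hE1] using he1
  have hE2v : E2 (1, 0, 0) = 1 := by simpa [hE2] using he0
  have hE1ne : E1 ≠ 1 := fun h => pardini_neg_one_ne_one (by
    rw [← hE1v, h, AddChar.one_apply])
  have hE2ne1 : E2 ≠ E1 := fun h => pardini_neg_one_ne_one (by
    rw [← hE1v, ← h, hE2v])
  have hE2ne : E2 ≠ 1 := fun h => by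
    have : E2 (0, 1, 0) = 1 := by rw [h, AddChar.one_apply]
    rw [hE2] at this
    simp only [AddChar.compAddMonoidHom_apply, AddMonoidHom.coe_comp, AddMonoidHom.coe_fst,
      AddMonoidHom.coe_snd, Function.comp_apply] at this
    exact pardini_neg_one_ne_one (by rw [← he1, this])
  -- choose ψ ∉ {1, χ}
  set ψ : AddChar (ZMod 2 × ZMod 2 × ZMod 2) ℂˣ := if χ = E1 then E2 else E1 with hψ
  have hψ1 : ψ ≠ 1 := by
    rw [hψ]; split <;> [exact hE2ne; exact hE1ne]
  have hψχ : ψ ≠ χ := by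
    rw [hψ]; split
    · rename_i h; rw [h]; exact hE2ne1
    · rename_i h; exact fun hh => h hh.symm
  set χ₂ : AddChar (ZMod 2 × ZMod 2 × ZMod 2) ℂˣ := χ * ψ with hχ₂
  have hχχ : χ * χ = 1 := pardini_self_mul χ
  have hmulχχ₂ : χ * χ₂ = ψ := by
    ext σ
    rw [AddChar.mul_apply, hχ₂, AddChar.mul_apply, ← mul_assoc, pardini_sq, one_mul]
  have hχ₂1 : χ₂ ≠ 1 := by
    intro h
    apply hψχ
    have : χ * χ₂ = χ * 1 := by rw [h]
    rw [hmulχχ₂] at this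
    rw [this]
    exact mul_one χ
  have hχχ₂ : χ ≠ χ₂ := by
    intro h
    apply hψ1
    rw [← hmulχχ₂, ← h, hχχ]
  -- the two relations
  have R1 := hrel χ ψ hχ hψ1 (fun h => hψχ h.symm)
  have R2 := hrel χ χ₂ hχ hχ₂1 hχχ₂
  rw [hmulχχ₂] at R2
  rw [show χ * ψ = χ₂ from hχ₂.symm] at R1
  set S1 : A := ∑ σ ∈ Finset.univ.filter (fun σ => χ σ = -1 ∧ ψ σ = -1), D σ with hS1
  set S2 : A := ∑ σ ∈ Finset.univ.filter (fun σ => χ σ = -1 ∧ χ₂ σ = -1), D σ with hS2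
  -- algebra: 2Lχ = S1 + S2
  have key : 2 • L χ = S1 + S2 := by
    have h3 : L χ + L ψ + (L χ + L χ₂) = L χ₂ + S1 + (L ψ + S2) := by rw [R1, R2]
    have h4 : 2 • L χ + (L ψ + L χ₂) = (S1 + S2) + (L ψ + L χ₂) := by
      calc 2 • L χ + (L ψ + L χ₂) = L χ + L ψ + (L χ + L χ₂) := by
            rw [two_smul]; abel
        _ = L χ₂ + S1 + (L ψ + S2) := h3
        _ = (S1 + S2) + (L ψ + L χ₂) := by abel
    exact add_right_cancel h4
  rw [key, hS1, hS2]
  -- combinatorics: the two index sets partition {σ : χ σ = -1}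
  rw [← Finset.sum_union]
  · congr 1
    ext σ
    simp only [Finset.mem_union, Finset.mem_filter, Finset.mem_univ, true_and]
    constructor
    · rintro (⟨h, _⟩ | ⟨h, _⟩) <;> exact h
    · intro h
      rcases pardini_vals ψ σ with hv | hv
      · refine Or.inr ⟨h, ?_⟩
        rw [hχ₂, AddChar.mul_apply, h, hv, mul_one]
      · exact Or.inl ⟨h, hv⟩
  · rw [Finset.disjoint_filter]
    rintro σ _ ⟨hχσ, hψσ⟩ ⟨_, hχ₂σ⟩
    rw [hχ₂, AddChar.mul_apply, hχσ, hψσ, neg_mul_neg, one_mul] at hχ₂σ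
    exact pardini_neg_one_ne_one hχ₂σ.symm
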